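/- arXiv:math/0303110 — 3 statements merged into one kernel-verified Lean document; each statement's English description precedes it below -/
import Mathlib

section
/- A Z^n-graded module M over S = k[x_1,...,x_n] that is squarefree is generated as an S-module by its squarefree-degree components ⋃_{F ⊆ [n]} M_F; in particular, every squarefree module is finitely generated. -/
open MvPolynomial

/-- The monomial `x^b` in `S = k[x_1, …, x_n]` for an exponent vector `b ∈ ℕⁿ`. -/
noncomputable def monomialOf (k : Type*) [Field k] {n : ℕ} (b : Fin n → ℕ) :
    MvPolynomial (Fin n) k :=
  monomial (Finsupp.equivFunOnFinite.symm b) 1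

/-- `supp₊(a) = {i : a_i > 0}` for `a ∈ ℤⁿ`. -/
def posSupp {n : ℕ} (a : Fin n → ℤ) : Set (Fin n) := {i | 0 < a i}

/-- A `ℤⁿ`-grading (by `k`-subspaces, compatible with multiplication by monomials)
on a module `M` over `S = k[x_1, …, x_n]`. -/
structure ZnGrading (k : Type*) [Field k] (n : ℕ) (M : Type*) [AddCommGroup M]
    [Module (MvPolynomial (Fin n) k) M] [Module k M]
    [IsScalarTower k (MvPolynomial (Fin n) k) M] where
  /-- the degree-`a` component `M_a` -/
  deg : (Fin n → ℤ) → Submodule k M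
  /-- `M = ⊕_a M_a` -/
  internal : DirectSum.IsInternal deg
  /-- `x^b · M_a ⊆ M_{a+b}` -/
  smul_mem : ∀ (a : Fin n → ℤ) (b : Fin n → ℕ), ∀ m ∈ deg a,
    (monomialOf k b) • m ∈ deg (a + fun i => (b i : ℤ))

/-- A `ℤⁿ`-graded `S`-module is *squarefree* if it is `ℕⁿ`-graded with
finite-dimensional components, and multiplication `x^b : M_a → M_{a+b}` is bijective
whenever `supp₊(a+b) = supp₊(a)`. -/
def ZnGrading.IsSquarefree {k : Type*} [Field k] {n : ℕ} {M : Type*}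
    [AddCommGroup M] [Module (MvPolynomial (Fin n) k) M] [Module k M]
    [IsScalarTower k (MvPolynomial (Fin n) k) M] (G : ZnGrading k n M) : Prop :=
  (∀ a : Fin n → ℤ, (∃ i, a i < 0) → G.deg a = ⊥) ∧
  (∀ a : Fin n → ℤ, FiniteDimensional k (G.deg a)) ∧
  (∀ a b : Fin n → ℕ,
    posSupp (fun i => ((a i : ℤ) + (b i : ℤ))) = posSupp (fun i => (a i : ℤ)) →
    Set.BijOn (fun m => (monomialOf k b) • m)
      ((G.deg fun i => (a i : ℤ)) : Set M)
      ((G.deg fun i => (a i : ℤ) + (b i : ℤ)) : Set M))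

abbrev squarefreeDeg {n : ℕ} (F : Finset (Fin n)) : Fin n → ℤ := fun i => if i ∈ F then 1 else 0

namespace ZnGrading

variable {k : Type*} [Field k] {n : ℕ} {M : Type*} [AddCommGroup M]
  [Module (MvPolynomial (Fin n) k) M] [Module k M]
  [IsScalarTower k (MvPolynomial (Fin n) k) M] (G : ZnGrading k n M)

theorem span_eq_top_of_deg_subset {T : Set M}
    (h : ∀ a, (G.deg a : Set M) ⊆ Submodule.span (MvPolynomial (Fin n) k) T) :
    Submodule.span (MvPolynomial (Fin n) k) T = ⊤ := by
  have hle : ⨆ a, G.deg a ≤ (Submodule.span (MvPolynomial (Fin n) k) T).restrictScalars k :=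
    iSup_le h
  rwa [G.internal.submodule_iSup_eq_top, top_le_iff, Submodule.restrictScalars_eq_top_iff] at hle

/-- Write `a = a₀ + b` with `a₀` the squarefree degree on `supp₊ a` and `b = (a - 1)⁺`; then
`x^b : M_{a₀} → M_a` is onto. -/
theorem deg_subset_span_squarefreeDeg (hsq : G.IsSquarefree) (a : Fin n → ℤ) :
    (G.deg a : Set M) ⊆ Submodule.span (MvPolynomial (Fin n) k)
      (⋃ F : Finset (Fin n), (G.deg (squarefreeDeg F) : Set M)) := by
  by_cases hneg : ∃ i, a i < 0
  · simp [hsq.1 a hneg]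
  push Not at hneg
  let a₀ : Fin n → ℕ := fun i => if 0 < a i then 1 else 0
  let b : Fin n → ℕ := fun i => (a i - 1).toNat
  have hsum : (fun i => (a₀ i : ℤ) + b i) = a := by
    funext i
    have := hneg i
    simp only [a₀, b]
    split_ifs <;> omega
  have hsupp : posSupp (fun i => (a₀ i : ℤ) + b i) = posSupp (fun i => (a₀ i : ℤ)) := by
    ext i
    have := hneg i
    simp only [posSupp, Set.mem_ofPred_eq, a₀, b]
    split_ifs <;> omega
  have ha₀ : (fun i => (a₀ i : ℤ)) = squarefreeDeg (Finset.univ.filter fun i => 0 < a i) := by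
    funext i
    simp [a₀, squarefreeDeg]
  intro m hm
  obtain ⟨m₀, hm₀, rfl⟩ := (hsq.2.2 a₀ b hsupp).surjOn (hsum ▸ hm)
  exact Submodule.smul_mem _ _ (Submodule.subset_span (Set.mem_iUnion.2 ⟨_, ha₀ ▸ hm₀⟩))

end ZnGrading

/-- a squarefree `ℤⁿ`-graded module over `S = k[x_1, …, x_n]` is
generated as an `S`-module by its squarefree-degree components `⋃_{F ⊆ [n]} M_F`;
in particular every squarefree module is finitely generated. -/
theorem squarefree_generated_by_squarefree_degrees
    {k : Type*} [Field k] {n : ℕ} {M : Type*} [AddCommGroup M]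
    [Module (MvPolynomial (Fin n) k) M] [Module k M]
    [IsScalarTower k (MvPolynomial (Fin n) k) M]
    (G : ZnGrading k n M) (hsq : G.IsSquarefree) :
    Submodule.span (MvPolynomial (Fin n) k)
        (⋃ F : Finset (Fin n),
          (G.deg (fun i => if i ∈ F then (1 : ℤ) else 0) : Set M)) = ⊤ ∧
      Module.Finite (MvPolynomial (Fin n) k) M := by
  have hspan := G.span_eq_top_of_deg_subset (G.deg_subset_span_squarefreeDeg hsq)
  refine ⟨hspan, ⟨?_⟩⟩
  rw [← hspan, Submodule.span_iUnion]
  exact Submodule.fg_iSup _ fun F =>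
    (Module.Finite.iff_fg.1 (hsq.2.1 (squarefreeDeg F))).span
end

section
/- The category of squarefree S-modules is closed under kernels, cokernels, and extensions inside the category of Z^n-graded S-modules. In particular, if 0 → M' → M → M'' → 0 is an exact sequence of Z^n-graded S-modules with M' and M'' squarefree, then M is squarefree. -/
open MvPolynomial

section SqfHelpers
variable {k : Type*} [Field k] {n : ℕ} {A B : Type*}
  [AddCommGroup A] [Module (MvPolynomial (Fin n) k) A] [Module k A]
  [IsScalarTower k (MvPolynomial (Fin n) k) A]
  [AddCommGroup B] [Module (MvPolynomial (Fin n) k) B] [Module k B]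
  [IsScalarTower k (MvPolynomial (Fin n) k) B]

theorem exists_homog_preimage (GA : ZnGrading k n A) (GB : ZnGrading k n B)
    (h : A →ₗ[MvPolynomial (Fin n) k] B)
    (hgr : ∀ a, h '' (GA.deg a : Set A) ⊆ (GB.deg a : Set B))
    {a : Fin n → ℤ} {u : A} (hy : h u ∈ GB.deg a) :
    ∃ v ∈ GA.deg a, h v = h u := by
  classical
  set hk := h.restrictScalars k with hhk
  have hcomp : ∀ c (x : GA.deg c), hk x ∈ GB.deg c := fun c x => hgr c ⟨x, x.2, rfl⟩
  let F : ∀ c : Fin n → ℤ, ↥(GA.deg c) →ₗ[k] ↥(GB.deg c) := fun c =>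
    LinearMap.codRestrict (GB.deg c) (hk.comp (GA.deg c).subtype) (fun x => hcomp c x)
  let Φ : DirectSum (Fin n → ℤ) (fun c => ↥(GA.deg c)) →ₗ[k]
      DirectSum (Fin n → ℤ) (fun c => ↥(GB.deg c)) := DFinsupp.mapRange.linearMap F
  have key : (DirectSum.coeLinearMap GB.deg).comp Φ
      = hk.comp (DirectSum.coeLinearMap GA.deg) := by
    refine DirectSum.linearMap_ext _ fun c => ?_
    ext x
    have : Φ (DirectSum.of (fun i => ↥(GA.deg i)) c x)
        = DirectSum.of (fun i => ↥(GB.deg i)) c (F c x) :=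
      DFinsupp.mapRange_single (hf := fun i => map_zero _)
    simp only [LinearMap.coe_comp, Function.comp_apply, DirectSum.lof_eq_of]
    rw [this, DirectSum.coeLinearMap_of, DirectSum.coeLinearMap_of]
    rfl
  obtain ⟨d, hd⟩ := GA.internal.surjective u
  have hd' : DirectSum.coeLinearMap GA.deg d = u := hd
  have h1 : DirectSum.coeLinearMap GB.deg (Φ d) = h u := by
    have := congrArg (fun φ => φ d) key
    exact (show _ = hk u by simpa [hd'] using this)
  have h2 : DirectSum.coeLinearMap GB.deg
      (DirectSum.lof k _ (fun c => GB.deg c) a ⟨h u, hy⟩) = h u := by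
    simp [DirectSum.lof_eq_of, DirectSum.coeLinearMap_of]
  have h3 : Φ d = DirectSum.lof k _ (fun c => GB.deg c) a ⟨h u, hy⟩ :=
    GB.internal.injective (h1.trans h2.symm)
  have h4 : (Φ d) a = ⟨h u, hy⟩ := by rw [h3]; simp [DirectSum.lof_eq_of]
  refine ⟨(d a : A), (d a).2, ?_⟩
  have h5 : (Φ d) a = F a (d a) := DFinsupp.mapRange_apply _ (fun i => map_zero (F i)) d a
  exact congrArg Subtype.val (h5 ▸ h4)

theorem ZnGrading.smul_mem'' (G : ZnGrading k n A) (a b : Fin n → ℕ) {m : A}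
    (hm : m ∈ G.deg (fun i => (a i : ℤ))) :
    monomialOf k b • m ∈ G.deg (fun i => (a i : ℤ) + (b i : ℤ)) :=
  G.smul_mem _ b m hm

end SqfHelpers

/-- inside the category of `ℤⁿ`-graded `S`-modules, squarefree modules
are closed under kernels, cokernels and extensions.  Explicitly: (kernels) a graded
submodule realizing the kernel of a degree-preserving map between squarefree modules
is squarefree; (cokernels) a graded quotient realizing the cokernel is squarefree;
(extensions) in a short exact sequence `0 → M' → M → M'' → 0` of graded modules with
degree-preserving maps, if `M'` and `M''` are squarefree then so is `M`. -/


theorem squarefree_closed_under_ker_coker_ext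
    {k : Type*} [Field k] {n : ℕ} {A B C : Type*}
    [AddCommGroup A] [Module (MvPolynomial (Fin n) k) A] [Module k A]
    [IsScalarTower k (MvPolynomial (Fin n) k) A]
    [AddCommGroup B] [Module (MvPolynomial (Fin n) k) B] [Module k B]
    [IsScalarTower k (MvPolynomial (Fin n) k) B]
    [AddCommGroup C] [Module (MvPolynomial (Fin n) k) C] [Module k C]
    [IsScalarTower k (MvPolynomial (Fin n) k) C] :
    -- kernels
    ((∀ (GA : ZnGrading k n A) (GB : ZnGrading k n B) (GC : ZnGrading k n C)
        (f : A →ₗ[MvPolynomial (Fin n) k] B) (g : B →ₗ[MvPolynomial (Fin n) k] C),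
      GB.IsSquarefree → GC.IsSquarefree →
      (∀ a, g '' (GB.deg a : Set B) ⊆ (GC.deg a : Set C)) →
      Function.Injective f →
      (∀ a, f '' (GA.deg a : Set A) =
        (GB.deg a : Set B) ∩ (LinearMap.ker g : Set B)) →
      GA.IsSquarefree)) ∧
    -- cokernels
    ((∀ (GA : ZnGrading k n A) (GB : ZnGrading k n B) (GC : ZnGrading k n C)
        (f : A →ₗ[MvPolynomial (Fin n) k] B) (g : B →ₗ[MvPolynomial (Fin n) k] C),
      GA.IsSquarefree → GB.IsSquarefree →
      (∀ a, f '' (GA.deg a : Set A) ⊆ (GB.deg a : Set B)) →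
      Function.Surjective g → LinearMap.ker g = LinearMap.range f →
      (∀ a, g '' (GB.deg a : Set B) = (GC.deg a : Set C)) →
      GC.IsSquarefree)) ∧
    -- extensions
    ((∀ (GA : ZnGrading k n A) (GB : ZnGrading k n B) (GC : ZnGrading k n C)
        (f : A →ₗ[MvPolynomial (Fin n) k] B) (g : B →ₗ[MvPolynomial (Fin n) k] C),
      GA.IsSquarefree → GC.IsSquarefree →
      (∀ a, f '' (GA.deg a : Set A) ⊆ (GB.deg a : Set B)) →
      (∀ a, g '' (GB.deg a : Set B) ⊆ (GC.deg a : Set C)) →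
      Function.Injective f → Function.Surjective g →
      LinearMap.ker g = LinearMap.range f →
      GB.IsSquarefree)) := by
  classical
  constructor
  · -- kernels
    intro GA GB GC f g hB hC hg hf hker
    obtain ⟨hBneg, hBfin, hBbij⟩ := hB
    obtain ⟨hCneg, hCfin, hCbij⟩ := hC
    have hfmem : ∀ {a : Fin n → ℤ} {m : A}, m ∈ GA.deg a →
        f m ∈ GB.deg a ∧ f m ∈ LinearMap.ker g := by
      intro a m hm
      have h1 : f m ∈ ⇑f '' (GA.deg a : Set A) := ⟨m, hm, rfl⟩
      rw [hker a] at h1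
      exact h1
    refine ⟨?_, ?_, ?_⟩
    · intro a ha
      rw [Submodule.eq_bot_iff]
      intro m hm
      apply hf
      rw [map_zero]
      have h1 := (hfmem hm).1
      rw [hBneg a ha] at h1
      exact (Submodule.mem_bot k).1 h1
    · intro a
      haveI := hBfin a
      have hle : Submodule.map (f.restrictScalars k) (GA.deg a) ≤ GB.deg a := by
        rintro x ⟨y, hy, rfl⟩
        exact (hfmem hy).1
      haveI : FiniteDimensional k (Submodule.map (f.restrictScalars k) (GA.deg a)) :=
        Submodule.finiteDimensional_of_le hle
      exact (Submodule.equivMapOfInjective (f.restrictScalars k) hf (GA.deg a)).symm.finiteDimensional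
    · intro a b hs
      have hBb := hBbij a b hs
      have hCb := hCbij a b hs
      refine ⟨fun m hm => GA.smul_mem'' a b hm, ?_, ?_⟩
      · intro m1 h1 m2 h2 he
        apply hf
        refine hBb.injOn (hfmem h1).1 (hfmem h2).1 ?_
        show monomialOf k b • f m1 = monomialOf k b • f m2
        rw [← map_smul, ← map_smul]
        exact congrArg f he
      · intro m hm
        have hfm := hfmem hm
        obtain ⟨y, hy, hxy⟩ := hBb.surjOn hfm.1
        have hxy' : monomialOf k b • y = f m := hxy
        have hgy : g y ∈ GC.deg (fun i => (a i : ℤ)) := hg _ ⟨y, hy, rfl⟩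
        have hgy0 : g y = 0 := by
          refine hCb.injOn hgy (Submodule.zero_mem _) ?_
          show monomialOf k b • g y = monomialOf k b • (0 : C)
          rw [smul_zero, ← map_smul, hxy']
          exact LinearMap.mem_ker.1 hfm.2
        have hmem : y ∈ ⇑f '' (GA.deg (fun i => (a i : ℤ)) : Set A) := by
          rw [hker]
          exact ⟨hy, LinearMap.mem_ker.2 hgy0⟩
        obtain ⟨w, hw, rfl⟩ := hmem
        refine ⟨w, hw, ?_⟩
        show monomialOf k b • w = m
        apply hf
        rw [map_smul]
        exact hxy'
  constructor
  · -- cokernels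
    intro GA GB GC f g hA hB hfg hgsurj hex hsur
    obtain ⟨hAneg, hAfin, hAbij⟩ := hA
    obtain ⟨hBneg, hBfin, hBbij⟩ := hB
    refine ⟨?_, ?_, ?_⟩
    · intro a ha
      rw [Submodule.eq_bot_iff]
      intro c hc
      have hc' : c ∈ ⇑g '' (GB.deg a : Set B) := by rw [hsur a]; exact hc
      obtain ⟨m, hm, rfl⟩ := hc' 
      rw [hBneg a ha] at hm
      rw [(Submodule.mem_bot k).1 hm, map_zero]
    · intro a
      haveI := hBfin a
      have hEq : GC.deg a = Submodule.map (g.restrictScalars k) (GB.deg a) := by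
        apply SetLike.coe_injective
        rw [Submodule.map_coe]
        exact (hsur a).symm
      rw [hEq]
      exact Module.Finite.map _ _
    · intro a b hs
      have hAb := hAbij a b hs
      have hBb := hBbij a b hs
      refine ⟨fun c hc => GC.smul_mem'' a b hc, ?_, ?_⟩
      · intro c1 h1 c2 h2 he
        have hd : c1 - c2 ∈ GC.deg (fun i => (a i : ℤ)) := Submodule.sub_mem _ h1 h2
        have hd0 : monomialOf k b • (c1 - c2) = 0 := by
          rw [smul_sub, sub_eq_zero]
          exact he
        have hd' : c1 - c2 ∈ ⇑g '' (GB.deg (fun i => (a i : ℤ)) : Set B) := by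
          rw [hsur]; exact hd
        obtain ⟨m, hm, hgm⟩ := hd' 
        have hxm : monomialOf k b • m ∈ GB.deg (fun i => (a i : ℤ) + (b i : ℤ)) :=
          GB.smul_mem'' a b hm
        have hker' : monomialOf k b • m ∈ LinearMap.ker g := by
          rw [LinearMap.mem_ker, map_smul, hgm, hd0]
        rw [hex] at hker'
        obtain ⟨u, hu⟩ := hker'
        obtain ⟨v, hv, hfv⟩ :=
          exists_homog_preimage GA GB f hfg (a := fun i => (a i : ℤ) + (b i : ℤ))
            (u := u) (hu ▸ hxm)
        rw [hu] at hfv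
        obtain ⟨w, hw, hxw⟩ := hAb.surjOn hv
        have hxw' : monomialOf k b • w = v := hxw
        have h5 : monomialOf k b • (m - f w) = 0 := by
          rw [smul_sub, ← map_smul, hxw', hfv, sub_self]
        have hfw : f w ∈ GB.deg (fun i => (a i : ℤ)) := hfg _ ⟨w, hw, rfl⟩
        have h6 : m - f w ∈ GB.deg (fun i => (a i : ℤ)) := Submodule.sub_mem _ hm hfw
        have h7 : m - f w = 0 := by
          refine hBb.injOn h6 (Submodule.zero_mem _) ?_
          show monomialOf k b • (m - f w) = monomialOf k b • (0 : B)
          rw [h5, smul_zero]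
        have h8 : m = f w := by rwa [sub_eq_zero] at h7
        have h9 : g m = 0 := by
          rw [h8]
          exact LinearMap.mem_ker.1 (hex ▸ LinearMap.mem_range.2 ⟨w, rfl⟩)
        rw [hgm] at h9
        rwa [sub_eq_zero] at h9
      · intro c hc
        have hc' : c ∈ ⇑g '' (GB.deg (fun i => (a i : ℤ) + (b i : ℤ)) : Set B) := by
          rw [hsur]; exact hc
        obtain ⟨m, hm, rfl⟩ := hc' 
        obtain ⟨m', hm', hxm'⟩ := hBb.surjOn hm
        have hxm'' : monomialOf k b • m' = m := hxm'
        refine ⟨g m', ?_, ?_⟩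
        · show g m' ∈ (GC.deg (fun i => (a i : ℤ)) : Set C)
          rw [← hsur]
          exact ⟨m', hm', rfl⟩
        · show monomialOf k b • g m' = g m
          rw [← map_smul, hxm'']
  · -- extensions
    intro GA GB GC f g hA hC hfg hgc hf hg hex
    obtain ⟨hAneg, hAfin, hAbij⟩ := hA
    obtain ⟨hCneg, hCfin, hCbij⟩ := hC
    have hkerpiece : ∀ (a : Fin n → ℤ) (m : B), m ∈ GB.deg a → g m = 0 →
        ∃ w ∈ GA.deg a, f w = m := by
      intro a m hm hgm
      have hr : m ∈ LinearMap.range f := hex ▸ LinearMap.mem_ker.2 hgm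
      obtain ⟨u, hu⟩ := hr
      obtain ⟨v, hv, hfv⟩ := exists_homog_preimage GA GB f hfg (a := a) (u := u) (hu ▸ hm)
      exact ⟨v, hv, by rw [hfv, hu]⟩
    have hgsur : ∀ (a : Fin n → ℤ) (c : C), c ∈ GC.deg a → ∃ m ∈ GB.deg a, g m = c := by
      intro a c hc
      obtain ⟨u, hu⟩ := hg c
      obtain ⟨v, hv, hgv⟩ := exists_homog_preimage GB GC g hgc (a := a) (u := u) (hu ▸ hc)
      exact ⟨v, hv, by rw [hgv, hu]⟩
    refine ⟨?_, ?_, ?_⟩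
    · intro a ha
      rw [Submodule.eq_bot_iff]
      intro m hm
      have hgm : g m = 0 := by
        have h1 := hgc a ⟨m, hm, rfl⟩
        rw [hCneg a ha] at h1
        exact (Submodule.mem_bot k).1 h1
      obtain ⟨w, hw, rfl⟩ := hkerpiece a m hm hgm
      rw [hAneg a ha] at hw
      rw [(Submodule.mem_bot k).1 hw, map_zero]
    · intro a
      haveI := hCfin a
      haveI := hAfin a
      have h1 : (Submodule.map (g.restrictScalars k) (GB.deg a)).FG := by
        have hle : Submodule.map (g.restrictScalars k) (GB.deg a) ≤ GC.deg a := by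
          rintro x ⟨y, hy, rfl⟩
          exact hgc a ⟨y, hy, rfl⟩
        haveI : FiniteDimensional k (Submodule.map (g.restrictScalars k) (GB.deg a)) :=
          Submodule.finiteDimensional_of_le hle
        exact (Submodule.fg_iff_finiteDimensional _).2 this
      have h2 : (GB.deg a ⊓ LinearMap.ker (g.restrictScalars k)).FG := by
        have hle : GB.deg a ⊓ LinearMap.ker (g.restrictScalars k) ≤
            Submodule.map (f.restrictScalars k) (GA.deg a) := by
          intro x hx
          obtain ⟨w, hw, hfw⟩ := hkerpiece a x hx.1 hx.2
          exact ⟨w, hw, hfw⟩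
        haveI : FiniteDimensional k (Submodule.map (f.restrictScalars k) (GA.deg a)) :=
          Module.Finite.map _ _
        haveI : FiniteDimensional k
            (GB.deg a ⊓ LinearMap.ker (g.restrictScalars k) : Submodule k B) :=
          Submodule.finiteDimensional_of_le hle
        exact (Submodule.fg_iff_finiteDimensional _).2 this
      exact (Submodule.fg_iff_finiteDimensional _).1
        (Submodule.fg_of_fg_map_of_fg_inf_ker (g.restrictScalars k) h1 h2)
    · intro a b hs
      have hAb := hAbij a b hs
      have hCb := hCbij a b hs
      refine ⟨fun m hm => GB.smul_mem'' a b hm, ?_, ?_⟩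
      · intro m1 h1 m2 h2 he
        have hd : m1 - m2 ∈ GB.deg (fun i => (a i : ℤ)) := Submodule.sub_mem _ h1 h2
        have hd0 : monomialOf k b • (m1 - m2) = 0 := by
          rw [smul_sub, sub_eq_zero]
          exact he
        have hgd : g (m1 - m2) = 0 := by
          have hgm : g (m1 - m2) ∈ GC.deg (fun i => (a i : ℤ)) := hgc _ ⟨_, hd, rfl⟩
          refine hCb.injOn hgm (Submodule.zero_mem _) ?_
          show monomialOf k b • g (m1 - m2) = monomialOf k b • (0 : C)
          rw [smul_zero, ← map_smul, hd0, map_zero]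
        obtain ⟨w, hw, hfw⟩ := hkerpiece _ _ hd hgd
        have hxw : monomialOf k b • w = 0 := by
          apply hf
          rw [map_smul, hfw, map_zero, hd0]
        have hw0 : w = 0 := by
          refine hAb.injOn hw (Submodule.zero_mem _) ?_
          show monomialOf k b • w = monomialOf k b • (0 : A)
          rw [hxw, smul_zero]
        have : m1 - m2 = 0 := by rw [← hfw, hw0, map_zero]
        rwa [sub_eq_zero] at this
      · intro m hm
        have hgm : g m ∈ GC.deg (fun i => (a i : ℤ) + (b i : ℤ)) := hgc _ ⟨m, hm, rfl⟩
        obtain ⟨c, hc, hxc⟩ := hCb.surjOn hgm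
        have hxc' : monomialOf k b • c = g m := hxc
        obtain ⟨m', hm', hgm'⟩ := hgsur _ c hc
        have hd : m - monomialOf k b • m' ∈ GB.deg (fun i => (a i : ℤ) + (b i : ℤ)) :=
          Submodule.sub_mem _ hm (GB.smul_mem'' a b hm')
        have hgd : g (m - monomialOf k b • m') = 0 := by
          rw [map_sub, map_smul, hgm', sub_eq_zero]
          exact hxc'.symm
        obtain ⟨w, hw, hfw⟩ := hkerpiece _ _ hd hgd
        obtain ⟨w', hw', hxw'⟩ := hAb.surjOn hw
        have hxw'' : monomialOf k b • w' = w := hxw'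
        refine ⟨m' + f w', Submodule.add_mem _ hm' (hfg _ ⟨w', hw', rfl⟩), ?_⟩
        show monomialOf k b • (m' + f w') = m
        rw [smul_add, ← map_smul, hxw'', hfw]
        abel
end

section
/- Let M be a Z^n-graded module over S = k[x_1,...,x_n] (char k = 0) satisfying: multiplication x_i : M_{a-ε_i} → M_a is bijective whenever a_i ≠ 0 (this holds when M(-1) is straight). Define an action of ∂_i on M_a by: if a_i ≠ 0, ∂_i y := a_i y' where y' is the unique element with x_i y' = y; if a_i = 0, ∂_i y := 0. Then this makes M a left module over the Weyl algebra A, i.e., the relations ∂_i x_i - x_i ∂_i = 1, [∂_i, x_j] = 0 for i≠j, [∂_i,∂_j] = 0, and [x_i,x_j]=0 are satisfied on M. -/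
/-- A pair of commuting families of operators `X i`, `D i` (`i ∈ [n]`) on a
`k`-vector space `M` satisfying the Weyl algebra relations `∂ᵢxᵢ - xᵢ∂ᵢ = 1`,
all other pairs of generators commuting.  This is exactly the data of a left
module over the Weyl algebra `A = k⟨x_1, …, x_n, ∂_1, …, ∂_n⟩`. -/
def IsWeylAction {k : Type*} [Field k] {n : ℕ} {M : Type*} [AddCommGroup M]
    [Module k M] (X D : Fin n → Module.End k M) : Prop :=
  (∀ i, D i * X i - X i * D i = 1) ∧
  (∀ i j, i ≠ j → D i * X j = X j * D i) ∧
  (∀ i j, X i * X j = X j * X i) ∧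
  (∀ i j, D i * D j = D j * D i)

/-- The left `A`-module `M` is finitely generated: there is a finite subset `s ⊆ M`
such that the only `X`- and `D`-invariant subspace containing `s` is `M` itself. -/
def IsFGWeylModule {k : Type*} [Field k] {n : ℕ} {M : Type*} [AddCommGroup M]
    [Module k M] (X D : Fin n → Module.End k M) : Prop :=
  ∃ s : Finset M, ∀ N : Submodule k M, (↑s : Set M) ⊆ N →
    (∀ i : Fin n, ∀ m ∈ N, X i m ∈ N ∧ D i m ∈ N) → N = ⊤

/-- The simultaneous eigenspace `M_a = {y : (xᵢ∂ᵢ)y = aᵢy for all i}`. -/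
noncomputable def weylWeightSpace {k : Type*} [Field k] {n : ℕ} {M : Type*}
    [AddCommGroup M] [Module k M] (X D : Fin n → Module.End k M)
    (a : Fin n → ℤ) : Submodule k M :=
  ⨅ i : Fin n, Module.End.eigenspace (X i * D i) ((a i : ℤ) : k)


namespace WeylAux

variable {k : Type*} [Field k] {n : ℕ} {M : Type*} [AddCommGroup M] [Module k M]

def eA (a : Fin n → ℤ) (i : Fin n) : Fin n → ℤ := fun j => a j + if j = i then 1 else 0
def eS (a : Fin n → ℤ) (i : Fin n) : Fin n → ℤ := fun j => a j - if j = i then 1 else 0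

lemma eS_eA (a : Fin n → ℤ) (i : Fin n) : eS (eA a i) i = a := by
  funext j; simp [eS, eA]

lemma eA_eS (a : Fin n → ℤ) (i : Fin n) : eA (eS a i) i = a := by
  funext j; simp [eS, eA]

lemma eA_self (a : Fin n → ℤ) (i : Fin n) : eA a i i = a i + 1 := by simp [eA]
lemma eS_self (a : Fin n → ℤ) (i : Fin n) : eS a i i = a i - 1 := by simp [eS]
lemma eA_ne (a : Fin n → ℤ) {i j : Fin n} (h : i ≠ j) : eA a j i = a i := by simp [eA, h]
lemma eS_ne (a : Fin n → ℤ) {i j : Fin n} (h : i ≠ j) : eS a j i = a i := by simp [eS, h]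

lemma eS_comm (a : Fin n → ℤ) (i j : Fin n) : eS (eS a i) j = eS (eS a j) i := by
  funext l; simp [eS]; ring

lemma eS_eA_comm (a : Fin n → ℤ) (i j : Fin n) : eS (eA a j) i = eA (eS a i) j := by
  funext l; simp [eS, eA]; ring

variable (deg : (Fin n → ℤ) → Submodule k M) (X : Fin n → Module.End k M)

noncomputable def XEquiv
    (hXdeg : ∀ a i, ∀ m ∈ deg a, X i m ∈ deg (eA a i))
    (hbij : ∀ a i, a i ≠ 0 → Set.BijOn (X i) (deg (eS a i)) (deg a))
    (a : Fin n → ℤ) (i : Fin n) (h : a i ≠ 0) : (deg (eS a i)) ≃ₗ[k] (deg a) :=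
  LinearEquiv.ofBijective
    ((X i).restrict (p := deg (eS a i)) (q := deg a)
      (fun x hx => by simpa [eA_eS] using hXdeg (eS a i) i x hx))
    (by
      constructor
      · rintro ⟨x, hx⟩ ⟨y, hy⟩ hxy
        exact Subtype.ext ((hbij a i h).injOn hx hy (congrArg Subtype.val hxy))
      · rintro ⟨y, hy⟩
        obtain ⟨x, hx, hxy⟩ := (hbij a i h).surjOn hy
        exact ⟨⟨x, hx⟩, Subtype.ext hxy⟩)

noncomputable def Dcomp
    (hXdeg : ∀ a i, ∀ m ∈ deg a, X i m ∈ deg (eA a i))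
    (hbij : ∀ a i, a i ≠ 0 → Set.BijOn (X i) (deg (eS a i)) (deg a))
    (i : Fin n) (a : Fin n → ℤ) : (deg a) →ₗ[k] M :=
  if h : a i = 0 then 0
  else ((a i : ℤ) : k) • ((deg (eS a i)).subtype ∘ₗ
    (XEquiv deg X hXdeg hbij a i h).symm.toLinearMap)

lemma Dcomp_zero
    (hXdeg : ∀ a i, ∀ m ∈ deg a, X i m ∈ deg (eA a i))
    (hbij : ∀ a i, a i ≠ 0 → Set.BijOn (X i) (deg (eS a i)) (deg a))
    (i : Fin n) (a : Fin n → ℤ) (h : a i = 0) (y : deg a) :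
    Dcomp deg X hXdeg hbij i a y = 0 := by
  simp [Dcomp, h]

lemma Dcomp_spec
    (hXdeg : ∀ a i, ∀ m ∈ deg a, X i m ∈ deg (eA a i))
    (hbij : ∀ a i, a i ≠ 0 → Set.BijOn (X i) (deg (eS a i)) (deg a))
    (i : Fin n) (a : Fin n → ℤ) (y : deg a) (y' : M) (hy' : y' ∈ deg (eS a i))
    (hxy : X i y' = y) :
    Dcomp deg X hXdeg hbij i a y = ((a i : ℤ) : k) • y' := by
  by_cases h : a i = 0
  · simp [Dcomp_zero deg X hXdeg hbij i a h y, h]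
  · have he : (XEquiv deg X hXdeg hbij a i h).symm y = ⟨y', hy'⟩ := by
      rw [LinearEquiv.symm_apply_eq]
      refine Subtype.ext ?_
      show (y : M) = X i y'
      simp [XEquiv, LinearMap.restrict_apply, hxy]
    simp [Dcomp, h, he]

noncomputable def Dop
    (hInternal : DirectSum.IsInternal deg)
    (hXdeg : ∀ a i, ∀ m ∈ deg a, X i m ∈ deg (eA a i))
    (hbij : ∀ a i, a i ≠ 0 → Set.BijOn (X i) (deg (eS a i)) (deg a))
    (i : Fin n) : Module.End k M :=
  (DirectSum.toModule k _ M (fun a => Dcomp deg X hXdeg hbij i a)) ∘ₗ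
    (LinearEquiv.ofBijective (DirectSum.coeLinearMap deg) hInternal).symm.toLinearMap

lemma Dop_apply
    (hInternal : DirectSum.IsInternal deg)
    (hXdeg : ∀ a i, ∀ m ∈ deg a, X i m ∈ deg (eA a i))
    (hbij : ∀ a i, a i ≠ 0 → Set.BijOn (X i) (deg (eS a i)) (deg a))
    (i : Fin n) (a : Fin n → ℤ) (y : M) (hy : y ∈ deg a) :
    Dop deg X hInternal hXdeg hbij i y = Dcomp deg X hXdeg hbij i a ⟨y, hy⟩ := by
  have h1 : (LinearEquiv.ofBijective (DirectSum.coeLinearMap deg) hInternal).symm y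
      = DirectSum.lof k _ (fun a => (deg a : Submodule k M)) a ⟨y, hy⟩ := by
    apply (LinearEquiv.ofBijective (DirectSum.coeLinearMap deg) hInternal).injective
    rw [LinearEquiv.apply_symm_apply]
    simp [LinearEquiv.ofBijective_apply, DirectSum.coeLinearMap, DirectSum.toModule_lof]
  simp [Dop, h1, DirectSum.toModule_lof]

lemma end_ext
    (hInternal : DirectSum.IsInternal deg) {F G : Module.End k M}
    (h : ∀ a, ∀ y ∈ deg a, F y = G y) : F = G := by
  ext y
  have hy : y ∈ ⨆ a, deg a := by
    rw [hInternal.submodule_iSup_eq_top]; trivial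
  refine Submodule.iSup_induction (motive := fun y => F y = G y) deg hy h (by simp) ?_
  intro x z hx hz
  simp [map_add, hx, hz]

end WeylAux

/-- let `M` be a `ℤⁿ`-graded module over `S = k[x_1,…,x_n]`
(`char k = 0`), with multiplication operators `X i` (by `x_i`), such that
`xᵢ : M_{a-εᵢ} → M_a` is bijective whenever `aᵢ ≠ 0`.  Defining `∂ᵢ y := aᵢ y'`
for `y ∈ M_a` with `aᵢ ≠ 0` (where `y'` is the unique element with `xᵢ y' = y`)
and `∂ᵢ y := 0` when `aᵢ = 0`, the operators `∂ᵢ` extend to linear endomorphisms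
making `M` a left module over the Weyl algebra `A`. -/
theorem straight_module_weyl_structure {k : Type*} [Field k] [CharZero k]
    {n : ℕ} {M : Type*} [AddCommGroup M] [Module k M]
    (deg : (Fin n → ℤ) → Submodule k M)
    (hInternal : DirectSum.IsInternal deg)
    (X : Fin n → Module.End k M)
    (hXcomm : ∀ i j, X i * X j = X j * X i)
    (hXdeg : ∀ (a : Fin n → ℤ) (i : Fin n), ∀ m ∈ deg a,
      X i m ∈ deg (fun j => a j + if j = i then 1 else 0))
    (hbij : ∀ (a : Fin n → ℤ) (i : Fin n), a i ≠ 0 →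
      Set.BijOn (X i) (deg (fun j => a j - if j = i then 1 else 0)) (deg a)) :
    ∃ D : Fin n → Module.End k M,
      (∀ (a : Fin n → ℤ) (i : Fin n), ∀ y ∈ deg a,
        (a i = 0 → D i y = 0) ∧
        (∀ y' ∈ deg (fun j => a j - if j = i then 1 else 0),
          X i y' = y → D i y = ((a i : ℤ) : k) • y')) ∧
      IsWeylAction X D := by
  classical
  have hXdeg' : ∀ a i, ∀ m ∈ deg a, X i m ∈ deg (WeylAux.eA a i) := hXdeg
  have hbij' : ∀ a i, a i ≠ 0 → Set.BijOn (X i) (deg (WeylAux.eS a i)) (deg a) := hbij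
  set D : Fin n → Module.End k M := fun i => WeylAux.Dop deg X hInternal hXdeg' hbij' i with hDdef
  have hD0 : ∀ (a : Fin n → ℤ) (i : Fin n) (y : M), y ∈ deg a → a i = 0 → D i y = 0 := by
    intro a i y hy h
    rw [hDdef]
    rw [WeylAux.Dop_apply deg X hInternal hXdeg' hbij' i a y hy,
      WeylAux.Dcomp_zero deg X hXdeg' hbij' i a h]
  have hD1 : ∀ (a : Fin n → ℤ) (i : Fin n) (y : M), y ∈ deg a →
      ∀ y' ∈ deg (WeylAux.eS a i), X i y' = y → D i y = ((a i : ℤ) : k) • y' := by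
    intro a i y hy y' hy' hxy
    rw [hDdef]
    rw [WeylAux.Dop_apply deg X hInternal hXdeg' hbij' i a y hy,
      WeylAux.Dcomp_spec deg X hXdeg' hbij' i a ⟨y, hy⟩ y' hy' hxy]
  have hpre : ∀ (a : Fin n → ℤ) (i : Fin n), a i ≠ 0 → ∀ y ∈ deg a,
      ∃ y' ∈ deg (WeylAux.eS a i), X i y' = y := by
    intro a i h y hy
    obtain ⟨x, hx, hxy⟩ := (hbij' a i h).surjOn hy
    exact ⟨x, hx, hxy⟩
  have hinj : ∀ (a : Fin n → ℤ) (i : Fin n), a i ≠ 0 →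
      ∀ u ∈ deg (WeylAux.eS a i), ∀ v ∈ deg (WeylAux.eS a i), X i u = X i v → u = v := by
    intro a i h u hu v hv huv
    exact (hbij' a i h).injOn hu hv huv
  refine ⟨D, ?_, ?_, ?_, hXcomm, ?_⟩
  · intro a i y hy
    exact ⟨fun h => hD0 a i y hy h, fun y' hy' hxy => hD1 a i y hy y' hy' hxy⟩
  -- relation ∂ᵢxᵢ - xᵢ∂ᵢ = 1
  · intro i
    refine WeylAux.end_ext deg hInternal ?_
    intro a y hy
    simp only [LinearMap.sub_apply, Module.End.mul_apply, Module.End.one_apply]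
    have hXy : X i y ∈ deg (WeylAux.eA a i) := hXdeg' a i y hy
    by_cases h1 : a i = -1
    · have hz : D i (X i y) = 0 :=
        hD0 (WeylAux.eA a i) i _ hXy (by rw [WeylAux.eA_self]; omega)
      have hne : a i ≠ 0 := by omega
      obtain ⟨y', hy', hxy⟩ := hpre a i hne y hy
      rw [hz, hD1 a i y hy y' hy' hxy, map_smul, hxy, h1]
      simp
    · have hDXy : D i (X i y) = (((a i) + 1 : ℤ) : k) • y := by
        have hy' : y ∈ deg (WeylAux.eS (WeylAux.eA a i) i) := by
          rw [WeylAux.eS_eA]; exact hy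
        have := hD1 (WeylAux.eA a i) i (X i y) hXy y hy' rfl
        rwa [WeylAux.eA_self] at this
      by_cases h2 : a i = 0
      · rw [hDXy, hD0 a i y hy h2, map_zero, h2]
        simp
      · obtain ⟨y', hy', hxy⟩ := hpre a i h2 y hy
        rw [hDXy, hD1 a i y hy y' hy' hxy, map_smul, hxy]
        push_cast
        rw [add_smul, one_smul, add_sub_cancel_left]
  -- relation [∂ᵢ, xⱼ] = 0 for i ≠ j
  · intro i j hij
    refine WeylAux.end_ext deg hInternal ?_
    intro a y hy
    simp only [Module.End.mul_apply]
    have hXy : X j y ∈ deg (WeylAux.eA a j) := hXdeg' a j y hy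
    by_cases h : a i = 0
    · rw [hD0 a i y hy h, map_zero,
        hD0 (WeylAux.eA a j) i _ hXy (by rw [WeylAux.eA_ne a hij]; exact h)]
    · obtain ⟨y', hy', hxy⟩ := hpre a i h y hy
      have h1 : X j y' ∈ deg (WeylAux.eS (WeylAux.eA a j) i) := by
        rw [WeylAux.eS_eA_comm]
        exact hXdeg' (WeylAux.eS a i) j y' hy'
      have h2 : X i (X j y') = X j y := by
        have hc := DFunLike.congr_fun (hXcomm i j) y'
        simp only [Module.End.mul_apply] at hc
        rw [hc, hxy]
      rw [hD1 (WeylAux.eA a j) i (X j y) hXy (X j y') h1 h2,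
        hD1 a i y hy y' hy' hxy, WeylAux.eA_ne a hij, map_smul]
  -- relation [∂ᵢ, ∂ⱼ] = 0
  · intro i j
    by_cases hij : i = j
    · rw [hij]
    have key0 : ∀ (i j : Fin n), i ≠ j → ∀ (a : Fin n → ℤ), ∀ y ∈ deg a, a j = 0 →
        D i (D j y) = 0 ∧ D j (D i y) = 0 := by
      intro i j hij a y hy h
      constructor
      · rw [hD0 a j y hy h, map_zero]
      · by_cases hi : a i = 0
        · rw [hD0 a i y hy hi, map_zero]
        · obtain ⟨y', hy', hxy⟩ := hpre a i hi y hy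
          rw [hD1 a i y hy y' hy' hxy, map_smul,
            hD0 (WeylAux.eS a i) j y' hy' (by rw [WeylAux.eS_ne a (Ne.symm hij)]; exact h),
            smul_zero]
    refine WeylAux.end_ext deg hInternal ?_
    intro a y hy
    simp only [Module.End.mul_apply]
    by_cases hj : a j = 0
    · rw [(key0 i j hij a y hy hj).1, (key0 i j hij a y hy hj).2]
    by_cases hi : a i = 0
    · obtain ⟨K1, K2⟩ := key0 j i (Ne.symm hij) a y hy hi
      rw [K1, K2]
    -- both aᵢ, aⱼ nonzero
    obtain ⟨yi, hyi, hxyi⟩ := hpre a i hi y hy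
    have hji : (WeylAux.eS a i) j ≠ 0 := by rw [WeylAux.eS_ne a (Ne.symm hij)]; exact hj
    obtain ⟨yij, hyij, hxyij⟩ := hpre (WeylAux.eS a i) j hji yi hyi
    obtain ⟨yj, hyj, hxyj⟩ := hpre a j hj y hy
    have hij' : (WeylAux.eS a j) i ≠ 0 := by rw [WeylAux.eS_ne a hij]; exact hi
    obtain ⟨yji, hyji, hxyji⟩ := hpre (WeylAux.eS a j) i hij' yj hyj
    have e1 : D j (D i y) = ((a i : ℤ) : k) • ((a j : ℤ) : k) • yij := by
      rw [hD1 a i y hy yi hyi hxyi, map_smul,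
        hD1 (WeylAux.eS a i) j yi hyi yij hyij hxyij, WeylAux.eS_ne a (Ne.symm hij)]
    have e2 : D i (D j y) = ((a j : ℤ) : k) • ((a i : ℤ) : k) • yji := by
      rw [hD1 a j y hy yj hyj hxyj, map_smul,
        hD1 (WeylAux.eS a j) i yj hyj yji hyji hxyji, WeylAux.eS_ne a hij]
    have m1 : yji ∈ deg (WeylAux.eS (WeylAux.eS a i) j) := by
      rw [WeylAux.eS_comm]; exact hyji
    have m2 : X j yji ∈ deg (WeylAux.eS a i) := by
      have := hXdeg' (WeylAux.eS (WeylAux.eS a i) j) j yji m1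
      rwa [WeylAux.eA_eS] at this
    have c1 : X i (X j yji) = y := by
      have hc := DFunLike.congr_fun (hXcomm i j) yji
      simp only [Module.End.mul_apply] at hc
      rw [hc, hxyji, hxyj]
    have c2 : X i (X j yij) = y := by rw [hxyij, hxyi]
    have mXij : X j yij ∈ deg (WeylAux.eS a i) := by rw [hxyij]; exact hyi
    have exj : X j yij = X j yji :=
      hinj a i hi (X j yij) mXij (X j yji) m2 (by rw [c1, c2])
    have hyy : yij = yji := hinj (WeylAux.eS a i) j hji yij hyij yji m1 exj
    rw [e1, e2, hyy, smul_comm]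
end
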